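/- arXiv:1208.1897 — 2 statements merged into one kernel-verified Lean document; each statement's English description precedes it below -/
import Mathlib

section
/- Suppose V is not a simple R-module. Then G(V) is connected if and only if either V is not semisimple, or V is semisimple and contains a direct sum of three simple R-submodules. -/
/-- The vertices of the intersection graph: proper submodules of `V`. -/
def ProperSubmodule (R V : Type*) [Ring R] [AddCommGroup V] [Module R V] :=
  {W : Submodule R V // W ≠ ⊥ ∧ W ≠ ⊤}

/-- The intersection graph of proper submodules of `V`: two distinct proper
submodules are adjacent iff their intersection is nonzero. -/
def intersectionGraph (R V : Type*) [Ring R] [AddCommGroup V] [Module R V] :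
    SimpleGraph (ProperSubmodule R V) where
  Adj U W := U ≠ W ∧ U.1 ⊓ W.1 ≠ ⊥
  symm := ⟨by
    intro U W h
    exact ⟨h.1.symm, by rw [inf_comm]; exact h.2⟩⟩
  loopless := ⟨fun U h => h.1 rfl⟩

/-!
If `U`, `W` are disjoint proper submodules, they are joined through `U ⊔ W` unless
`U ⊕ W = V`; in that case, if `U` is not simple, they are joined through a nonzero `B < U`,
because modularity forces `B ⊕ W ≠ V`. So `G(V)` is connected as soon as it has a vertex and
`V` is not the direct sum of two simple submodules. If `V = S ⊕ T` with `S`, `T` simple, the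
submodule lattice has length two: every proper submodule is simple, so `G(V)` has no edges
but two vertices, and `V` is semisimple. A semisimple `V` not of this form has a proper
non-simple submodule `X`; an atom `a ≤ X`, an atom of `X` disjoint from `a`, and an atom of a
complement of `X` are independent. Conversely, for three independent simple submodules,
`S₁ ⊕ S₂` is proper and not simple.
-/

/-- For a submodule lattice: `V` is the direct sum of two simple submodules. -/
def HasComplementaryAtoms (α : Type*) [Lattice α] [BoundedOrder α] : Prop :=
  ∃ u w : α, IsAtom u ∧ IsAtom w ∧ IsCompl u w

section Lattice

variable {α : Type*} [Lattice α] [BoundedOrder α]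

theorem exists_ne_bot_ne_top_of_not_complementedLattice (h : ¬ComplementedLattice α) :
    ∃ x : α, x ≠ ⊥ ∧ x ≠ ⊤ := by
  by_contra! hα
  refine h ⟨fun x => ?_⟩
  rcases eq_or_ne x ⊥ with rfl | hx₀
  · exact ⟨⊤, isCompl_bot_top⟩
  · exact hα x hx₀ ▸ ⟨⊥, isCompl_top_bot⟩

theorem exists_not_isAtom_of_disjoint_sup {a b c : α} (ha : a ≠ ⊥) (hb : b ≠ ⊥)
    (hc : c ≠ ⊥) (hab : Disjoint a b) (habc : Disjoint c (a ⊔ b)) :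
    ∃ x : α, x ≠ ⊥ ∧ x ≠ ⊤ ∧ ¬IsAtom x := by
  refine ⟨a ⊔ b, fun h => ha (sup_eq_bot_iff.mp h).1, fun h => hc (habc.eq_bot_of_le ?_), ?_⟩
  · exact h ▸ le_top
  · intro hx
    have hlt : a < a ⊔ b := left_lt_sup.mpr fun hba => hb (hab.symm.eq_bot_of_le hba)
    exact ha (hx.lt_iff.mp hlt)

variable [IsModularLattice α]

theorem HasComplementaryAtoms.isAtom (h : HasComplementaryAtoms α) {x : α}
    (hx₀ : x ≠ ⊥) (hx₁ : x ≠ ⊤) : IsAtom x := by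
  obtain ⟨u, w, hu, hw, huw⟩ := h
  by_cases hux : u ≤ x
  · have hx : u ⊔ w ⊓ x = x := by
      rw [← sup_inf_assoc_of_le w hux, huw.sup_eq_top, top_inf_eq]
    rcases hw.le_iff.mp (inf_le_left : w ⊓ x ≤ w) with h | h
    · rw [h, sup_bot_eq] at hx
      exact hx ▸ hu
    · exact (hx₁ (by rw [← hx, h, huw.sup_eq_top])).elim
  · have hcu : IsCoatom u := huw.isCoatom_iff_isAtom.mpr hw
    have hxu : Disjoint x u := (hu.not_le_iff_disjoint.mp hux).symm
    have hxu' : Codisjoint x u :=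
      (hcu.not_le_iff_codisjoint.mp fun hxu_le => hx₀ (hxu.eq_bot_of_le hxu_le)).symm
    exact (IsCompl.mk hxu hxu').isAtom_iff_isCoatom.mpr hcu

theorem HasComplementaryAtoms.complementedLattice (h : HasComplementaryAtoms α) :
    ComplementedLattice α := by
  refine ⟨fun x => ?_⟩
  rcases eq_or_ne x ⊥ with rfl | hx₀
  · exact ⟨⊤, isCompl_bot_top⟩
  rcases eq_or_ne x ⊤ with rfl | hx₁
  · exact ⟨⊥, isCompl_top_bot⟩
  have hx : IsAtom x := h.isAtom hx₀ hx₁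
  obtain ⟨u, w, hu, hw, huw⟩ := h
  rcases eq_or_ne x u with rfl | hxu
  · exact ⟨w, huw⟩
  have hcu : IsCoatom u := huw.isCoatom_iff_isAtom.mpr hw
  refine ⟨u, hx.disjoint_of_ne hu hxu, ?_⟩
  exact (hcu.not_le_iff_codisjoint.mp fun hle => hxu ((hu.le_iff_eq hx.1).mp hle)).symm

variable [ComplementedLattice α]

theorem exists_isAtom_triple_of_not_isAtom [IsAtomic α] {x : α} (hx₀ : x ≠ ⊥)
    (hx₁ : x ≠ ⊤) (hx : ¬IsAtom x) :
    ∃ a b c : α, IsAtom a ∧ IsAtom b ∧ IsAtom c ∧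
      a ⊓ (b ⊔ c) = ⊥ ∧ b ⊓ (a ⊔ c) = ⊥ ∧ c ⊓ (a ⊔ b) = ⊥ := by
  obtain ⟨a, ha, hax⟩ := (eq_bot_or_exists_atom_le x).resolve_left hx₀
  obtain ⟨t, hat⟩ := exists_isCompl a
  have hxt : x ⊓ t ≠ ⊥ := by
    intro hxt
    have hx_eq : a ⊔ t ⊓ x = x := by
      rw [← sup_inf_assoc_of_le t hax, hat.sup_eq_top, top_inf_eq]
    rw [inf_comm, hxt, sup_bot_eq] at hx_eq
    exact hx (hx_eq ▸ ha)
  obtain ⟨b, hb, hbxt⟩ := (eq_bot_or_exists_atom_le (x ⊓ t)).resolve_left hxt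
  obtain ⟨s, hxs⟩ := exists_isCompl x
  have hs : s ≠ ⊥ := fun h => hx₁ (eq_top_of_isCompl_bot (h ▸ hxs))
  obtain ⟨c, hc, hcs⟩ := (eq_bot_or_exists_atom_le s).resolve_left hs
  have hab : Disjoint a b := hat.disjoint.mono_right (hbxt.trans inf_le_right)
  have habc : Disjoint (a ⊔ b) c :=
    hxs.disjoint.mono (sup_le hax (hbxt.trans inf_le_left)) hcs
  refine ⟨a, b, c, ha, hb, hc, ?_, ?_, disjoint_iff.mp habc.symm⟩
  · exact disjoint_iff.mp (hab.disjoint_sup_right_of_disjoint_sup_left habc)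
  · exact disjoint_iff.mp
      (hab.symm.disjoint_sup_right_of_disjoint_sup_left (sup_comm a b ▸ habc))

theorem exists_not_isAtom_iff :
    (∃ x : α, x ≠ ⊥ ∧ x ≠ ⊤ ∧ ¬IsAtom x) ↔
      (∃ x : α, x ≠ ⊥ ∧ x ≠ ⊤) ∧ ¬HasComplementaryAtoms α := by
  constructor
  · rintro ⟨x, hx₀, hx₁, hx⟩
    exact ⟨⟨x, hx₀, hx₁⟩, fun h => hx (h.isAtom hx₀ hx₁)⟩
  · rintro ⟨⟨x, hx₀, hx₁⟩, hα⟩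
    obtain ⟨y, hxy⟩ := exists_isCompl x
    have hy₀ : y ≠ ⊥ := fun h => hx₁ (eq_top_of_isCompl_bot (h ▸ hxy))
    have hy₁ : y ≠ ⊤ := fun h => hx₀ (eq_bot_of_isCompl_top (h ▸ hxy))
    by_cases hx : IsAtom x
    · exact ⟨y, hy₀, hy₁, fun hy => hα ⟨x, y, hx, hy, hxy⟩⟩
    · exact ⟨x, hx₀, hx₁, hx⟩

theorem exists_isAtom_triple_iff [IsAtomic α] :
    (∃ a b c : α, IsAtom a ∧ IsAtom b ∧ IsAtom c ∧
      a ⊓ (b ⊔ c) = ⊥ ∧ b ⊓ (a ⊔ c) = ⊥ ∧ c ⊓ (a ⊔ b) = ⊥) ↔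
      ∃ x : α, x ≠ ⊥ ∧ x ≠ ⊤ ∧ ¬IsAtom x := by
  constructor
  · rintro ⟨a, b, c, ha, hb, hc, -, hb_ac, hc_ab⟩
    have hab : Disjoint a b :=
      (disjoint_iff.mpr hb_ac).symm.mono_left le_sup_left
    exact exists_not_isAtom_of_disjoint_sup ha.1 hb.1 hc.1 hab (disjoint_iff.mpr hc_ab)
  · rintro ⟨x, hx₀, hx₁, hx⟩
    exact exists_isAtom_triple_of_not_isAtom hx₀ hx₁ hx

end Lattice

section IntersectionGraph

variable {R V : Type*} [Ring R] [AddCommGroup V] [Module R V]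

theorem intersectionGraph_adj_of_lt {U W : ProperSubmodule R V} (h : U.1 < W.1) :
    (intersectionGraph R V).Adj U W :=
  ⟨fun hUW => h.ne (congrArg Subtype.val hUW), by rw [inf_eq_left.mpr h.le]; exact U.2.1⟩

theorem intersectionGraph_reachable_of_sup_ne_top {U W : ProperSubmodule R V}
    (hUW : Disjoint U.1 W.1) (hsup : U.1 ⊔ W.1 ≠ ⊤) :
    (intersectionGraph R V).Reachable U W := by
  let Z : ProperSubmodule R V := ⟨U.1 ⊔ W.1, fun h => U.2.1 (sup_eq_bot_iff.mp h).1, hsup⟩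
  have hUZ : U.1 < Z.1 := left_lt_sup.mpr fun h => W.2.1 (hUW.symm.eq_bot_of_le h)
  have hWZ : W.1 < Z.1 := right_lt_sup.mpr fun h => U.2.1 (hUW.eq_bot_of_le h)
  exact (intersectionGraph_adj_of_lt hUZ).reachable.trans
    (intersectionGraph_adj_of_lt hWZ).symm.reachable

theorem intersectionGraph_reachable_of_not_isAtom {U W : ProperSubmodule R V}
    (hUW : Disjoint U.1 W.1) (hU : ¬IsAtom U.1) :
    (intersectionGraph R V).Reachable U W := by
  obtain ⟨B, hBU, hB⟩ : ∃ B < U.1, B ≠ ⊥ := by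
    by_contra! h
    exact hU ⟨U.2.1, h⟩
  let U' : ProperSubmodule R V := ⟨B, hB, fun h => U.2.2 (top_unique (h ▸ hBU.le))⟩
  have hsup : U'.1 ⊔ W.1 ≠ ⊤ := by
    intro h
    have hU_eq : B ⊔ W.1 ⊓ U.1 = U.1 := by
      rw [← sup_inf_assoc_of_le W.1 hBU.le, show B ⊔ W.1 = ⊤ from h, top_inf_eq]
    rw [disjoint_iff.mp hUW.symm, sup_bot_eq] at hU_eq
    exact hBU.ne hU_eq
  exact (intersectionGraph_adj_of_lt (U := U') hBU).symm.reachable.trans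
    (intersectionGraph_reachable_of_sup_ne_top (hUW.mono_left hBU.le) hsup)

theorem intersectionGraph_preconnected (h : ¬HasComplementaryAtoms (Submodule R V)) :
    (intersectionGraph R V).Preconnected := by
  intro U W
  rcases eq_or_ne U W with rfl | hne
  · rfl
  by_cases hUW : U.1 ⊓ W.1 = ⊥
  · replace hUW := disjoint_iff.mpr hUW
    by_cases hU : IsAtom U.1
    · by_cases hW : IsAtom W.1
      · exact intersectionGraph_reachable_of_sup_ne_top hUW
          fun hsup => h ⟨U.1, W.1, hU, hW, ⟨hUW, codisjoint_iff.mpr hsup⟩⟩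
      · exact (intersectionGraph_reachable_of_not_isAtom hUW.symm hW).symm
    · exact intersectionGraph_reachable_of_not_isAtom hUW hU
  · exact SimpleGraph.Adj.reachable ⟨hne, hUW⟩

theorem HasComplementaryAtoms.intersectionGraph_eq_bot
    (h : HasComplementaryAtoms (Submodule R V)) : intersectionGraph R V = ⊥ := by
  ext U W
  refine ⟨fun ⟨hne, hUW⟩ => hUW (disjoint_iff.mp ?_), False.elim⟩
  exact (h.isAtom U.2.1 U.2.2).disjoint_of_ne (h.isAtom W.2.1 W.2.2)
    fun hUW' => hne (Subtype.ext hUW')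

theorem intersectionGraph_connected_iff :
    (intersectionGraph R V).Connected ↔
      (∃ W : Submodule R V, W ≠ ⊥ ∧ W ≠ ⊤) ∧
        ¬HasComplementaryAtoms (Submodule R V) := by
  constructor
  · intro hconn
    obtain ⟨U⟩ := hconn.nonempty
    refine ⟨⟨U.1, U.2⟩, fun h => ?_⟩
    have hbot := h.intersectionGraph_eq_bot
    obtain ⟨u, w, hu, hw, huw⟩ := h
    let u' : ProperSubmodule R V :=
      ⟨u, hu.1, fun h => hw.1 (eq_bot_of_isCompl_top (h ▸ huw).symm)⟩
    let w' : ProperSubmodule R V :=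
      ⟨w, hw.1, fun h => hu.1 (eq_bot_of_isCompl_top (h ▸ huw))⟩
    have hreach := hconn.preconnected u' w'
    rw [hbot, SimpleGraph.reachable_bot] at hreach
    have huw_eq : u = w := congrArg Subtype.val hreach
    rw [← huw_eq] at huw
    exact hu.1 (disjoint_self.mp huw.disjoint)
  · rintro ⟨⟨W, hW₀, hW₁⟩, h⟩
    have : Nonempty (ProperSubmodule R V) := ⟨⟨W, hW₀, hW₁⟩⟩
    exact .mk (intersectionGraph_preconnected h)

end IntersectionGraph

theorem stmt2_general (R V : Type*) [Ring R] [AddCommGroup V] [Module R V] :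
    (intersectionGraph R V).Connected ↔
      (¬ IsSemisimpleModule R V) ∨
        (IsSemisimpleModule R V ∧
          ∃ S₁ S₂ S₃ : Submodule R V,
            IsSimpleModule R S₁ ∧ IsSimpleModule R S₂ ∧ IsSimpleModule R S₃ ∧
            S₁ ⊓ (S₂ ⊔ S₃) = ⊥ ∧ S₂ ⊓ (S₁ ⊔ S₃) = ⊥ ∧ S₃ ⊓ (S₁ ⊔ S₂) = ⊥) := by
  rw [intersectionGraph_connected_iff]
  by_cases hss : IsSemisimpleModule R V
  · have := hss.toComplementedLattice
    simp only [hss, not_true_eq_false, true_and, false_or, isSimpleModule_iff_isAtom]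
    rw [exists_isAtom_triple_iff, exists_not_isAtom_iff]
  · simp only [hss, not_false_eq_true, true_or, iff_true]
    rw [isSemisimpleModule_iff] at hss
    exact ⟨exists_ne_bot_ne_top_of_not_complementedLattice hss,
      fun h => hss h.complementedLattice⟩

theorem stmt2 (R V : Type*) [Ring R] [AddCommGroup V] [Module R V]
    (hV : ¬ IsSimpleModule R V) :
    (intersectionGraph R V).Connected ↔
      (¬ IsSemisimpleModule R V) ∨
        (IsSemisimpleModule R V ∧
          ∃ S₁ S₂ S₃ : Submodule R V,
            IsSimpleModule R S₁ ∧ IsSimpleModule R S₂ ∧ IsSimpleModule R S₃ ∧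
            S₁ ⊓ (S₂ ⊔ S₃) = ⊥ ∧ S₂ ⊓ (S₁ ⊔ S₃) = ⊥ ∧ S₃ ⊓ (S₁ ⊔ S₂) = ⊥) :=
  stmt2_general R V
end

section
/- The following are equivalent: (i) G(V) has no cycles; (ii) G(V) has no 3-cycles; (iii) either V has a composition series of length at most 2, or V has a composition series of length 3 and a unique maximal R-submodule. -/
/-- `V` has a composition series (from `⊥` to `⊤`) of length `n`. -/
def HasCompositionSeriesOfLength (R V : Type*) [Ring R] [AddCommGroup V] [Module R V]
    (n : ℕ) : Prop :=
  ∃ s : RelSeries {p : Submodule R V × Submodule R V | p.1 ⋖ p.2},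
    s.head = ⊥ ∧ s.last = ⊤ ∧ s.length = n

open SimpleGraph Order

namespace SimpleGraph

variable {α : Type*} {G : SimpleGraph α}

lemma exists_isCycle_length_three_of_adj {a b c : α} (hab : G.Adj a b) (hac : G.Adj a c)
    (hbc : G.Adj b c) : ∃ (u : α) (w : G.Walk u u), w.IsCycle ∧ w.length = 3 := by
  classical
  exact G.is3Clique_iff_exists_cycle_length_three.1 ⟨_, is3Clique_triple_iff.2 ⟨hab, hac, hbc⟩⟩

lemma isAcyclic_of_forall_adj_eq_or_eq (m : α) (h : ∀ ⦃a b⦄, G.Adj a b → a = m ∨ b = m) :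
    G.IsAcyclic :=
  (isAcyclic_starGraph m).anti fun _ _ hab ↦ starGraph_adj.2 ⟨hab.ne, h hab⟩

end SimpleGraph

lemma isAtom_of_lt_of_height_le_two {α : Type*} [PartialOrder α] [OrderBot α] {x y : α}
    (hx : x ≠ ⊥) (hxy : x < y) (hy : height y ≤ 2) : IsAtom x := by
  refine ⟨hx, fun z hzx ↦ by_contra fun hz ↦ ?_⟩
  have h1 : 1 < height x := one_lt_height_iff.2 ⟨z, ⊥, bot_lt_iff_ne_bot.2 hz, hzx⟩
  have h2 : height x + 1 ≤ 2 := (height_add_one_le hxy).trans hy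
  have h3 : 2 + 1 ≤ height x + 1 := by gcongr; exact add_one_le_of_lt h1
  exact absurd (h3.trans h2) (by norm_num)

section Module

variable {R V : Type*} [Ring R] [AddCommGroup V] [Module R V]

lemma hasCompositionSeriesOfLength_iff_length_eq {n : ℕ} :
    HasCompositionSeriesOfLength R V n ↔ Module.length R V = n := by
  constructor
  · rintro ⟨s, hs₁, hs₂, rfl⟩
    exact (Module.length_compositionSeries s hs₁ hs₂).symm
  · intro h
    obtain ⟨s, hs₁, hs₂⟩ := isFiniteLength_iff_exists_compositionSeries.1
      (Module.length_ne_top_iff.1 (h ▸ ENat.natCast_ne_top n))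
    exact ⟨s, hs₁, hs₂, by exact_mod_cast (Module.length_compositionSeries s hs₁ hs₂).trans h⟩

lemma Module.length_eq_two_of_covBy {N : Submodule R V} (h₁ : ⊥ ⋖ N) (h₂ : N ⋖ ⊤) :
    Module.length R V = 2 :=
  hasCompositionSeriesOfLength_iff_length_eq.1
    ⟨⟨2, ![⊥, N, ⊤], Fin.forall_fin_two.2 ⟨h₁, h₂⟩⟩, rfl, rfl, rfl⟩

lemma isNoetherian_of_length_ne_top (h : Module.length R V ≠ ⊤) : IsNoetherian R V :=
  (isFiniteLength_iff_isNoetherian_isArtinian.1 (Module.length_ne_top_iff.1 h)).1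

lemma intersectionGraph_not_adj_of_isAtom {U W : ProperSubmodule R V} (hU : IsAtom U.1)
    (hW : IsAtom W.1) : ¬ (intersectionGraph R V).Adj U W := fun ⟨hUW, hinf⟩ ↦
  hinf (hU.disjoint_of_ne hW fun h ↦ hUW (Subtype.ext h)).eq_bot

lemma intersectionGraph_exists_isCycle_length_three {A B C : Submodule R V}
    (hA : A ≠ ⊤) (hB : B ≠ ⊤) (hC : C ≠ ⊤) (hAB : A ≠ B) (hAC : A ≠ C) (hBC : B ≠ C)
    (hABC : A ⊓ B ⊓ C ≠ ⊥) :
    ∃ (v : ProperSubmodule R V) (w : (intersectionGraph R V).Walk v v),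
      w.IsCycle ∧ w.length = 3 := by
  have ne_bot {X : Submodule R V} (hX : A ⊓ B ⊓ C ≤ X) : X ≠ ⊥ :=
    fun h ↦ hABC (le_bot_iff.1 (h ▸ hX))
  exact exists_isCycle_length_three_of_adj (a := ⟨A, ne_bot (by order), hA⟩)
    (b := ⟨B, ne_bot (by order), hB⟩) (c := ⟨C, ne_bot (by order), hC⟩)
    ⟨fun h ↦ hAB congr($h.1), ne_bot (by order)⟩ ⟨fun h ↦ hAC congr($h.1), ne_bot (by order)⟩
    ⟨fun h ↦ hBC congr($h.1), ne_bot (by order)⟩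

lemma intersectionGraph_exists_isCycle_length_three_of_lt {A B C : Submodule R V} (hA : ⊥ < A)
    (hAB : A < B) (hBC : B < C) (hC : C < ⊤) :
    ∃ (v : ProperSubmodule R V) (w : (intersectionGraph R V).Walk v v),
      w.IsCycle ∧ w.length = 3 :=
  intersectionGraph_exists_isCycle_length_three (hAB.trans (hBC.trans hC)).ne (hBC.trans hC).ne
    hC.ne hAB.ne (hAB.trans hBC).ne hBC.ne <| by
      rwa [inf_eq_left.2 hAB.le, inf_eq_left.2 (hAB.trans hBC).le, ← bot_lt_iff_ne_bot]

lemma intersectionGraph_exists_isCycle_length_three_of_four_le_length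
    (h : 4 ≤ Module.length R V) :
    ∃ (v : ProperSubmodule R V) (w : (intersectionGraph R V).Walk v v),
      w.IsCycle ∧ w.length = 3 := by
  rw [Module.length_eq_height] at h
  obtain ⟨p, hlast, hlen⟩ := exists_series_of_le_height (⊤ : Submodule R V) (n := 4) h
  have hp {i j : ℕ} (hij : i < j) (hj : j ≤ 4) : p ⟨i, by omega⟩ < p ⟨j, by omega⟩ :=
    p.strictMono (Fin.mk_lt_mk.2 hij)
  refine intersectionGraph_exists_isCycle_length_three_of_lt
    (bot_le.trans_lt (hp zero_lt_one (by norm_num))) (hp one_lt_two (by norm_num))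
    (hp (by norm_num : 2 < 3) (by norm_num)) ((hp (by norm_num : 3 < 4) le_rfl).trans_le ?_)
  rw [← hlast]
  exact le_of_eq (congrArg p (Fin.ext hlen.symm))

lemma intersectionGraph_exists_isCycle_length_three_of_isCoatom
    (h : Module.length R V = 3) {N B : Submodule R V} (hN : IsCoatom N) (hB : IsCoatom B)
    (hNB : N ≠ B) :
    ∃ (v : ProperSubmodule R V) (w : (intersectionGraph R V).Walk v v),
      w.IsCycle ∧ w.length = 3 := by
  have hsup : N ⊔ B = ⊤ := hN.sup_eq_top_of_ne hB hNB
  have hN' : N ⊓ B ⋖ N := inf_covBy_of_covBy_sup_right (hsup ▸ hB.covBy_top)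
  have hB' : N ⊓ B ⋖ B := inf_covBy_of_covBy_sup_left (hsup ▸ hN.covBy_top)
  have hinf : N ⊓ B ≠ ⊥ := by
    intro h0
    have := Module.length_eq_two_of_covBy (h0 ▸ hN') hN.covBy_top
    simp [h] at this
  exact intersectionGraph_exists_isCycle_length_three hN.1 hB.1
    (inf_le_right.trans_lt hB.lt_top).ne hNB hN'.lt.ne' hB'.lt.ne' (by rwa [inf_idem])

lemma intersectionGraph_isAcyclic_of_length_le_two (h : Module.length R V ≤ 2) :
    (intersectionGraph R V).IsAcyclic := by
  have hatom (W : ProperSubmodule R V) : IsAtom W.1 :=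
    isAtom_of_lt_of_height_le_two W.2.1 (lt_top_iff_ne_top.2 W.2.2)
      (Module.length_eq_height R V ▸ h)
  exact isAcyclic_bot.anti fun U W hUW ↦
    (intersectionGraph_not_adj_of_isAtom (hatom U) (hatom W) hUW).elim

lemma intersectionGraph_isAcyclic_of_length_eq_three (h : Module.length R V = 3)
    {B : Submodule R V} (hB : IsCoatom B) (huniq : ∀ M, IsCoatom M → M = B) :
    (intersectionGraph R V).IsAcyclic := by
  have : IsNoetherian R V := isNoetherian_of_length_ne_top (by simp [h])
  have hB₀ : B ≠ ⊥ := by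
    rintro rfl
    have := Module.length_eq_one_iff.2 <|
      (isSimpleModule_iff R V).2 (isSimpleOrder_iff_isCoatom_bot.2 hB)
    simp [h] at this
  have hB₂ : height B ≤ 2 := by
    have := (height_add_one_le hB.lt_top).trans_eq ((Module.length_eq_height R V).symm.trans h)
    exact (WithTop.add_le_add_iff_right ENat.one_ne_top).1 this
  have hatom (W : ProperSubmodule R V) (hW : W.1 ≠ B) : IsAtom W.1 := by
    obtain ⟨M, hM, hWM⟩ := (eq_top_or_exists_le_coatom W.1).resolve_left W.2.2
    exact isAtom_of_lt_of_height_le_two W.2.1 (lt_of_le_of_ne (huniq M hM ▸ hWM) hW) hB₂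
  refine isAcyclic_of_forall_adj_eq_or_eq ⟨B, hB₀, hB.1⟩ fun U W hUW ↦ ?_
  by_contra! hUW'
  exact intersectionGraph_not_adj_of_isAtom (hatom U fun h ↦ hUW'.1 (Subtype.ext h))
    (hatom W fun h ↦ hUW'.2 (Subtype.ext h)) hUW

lemma intersectionGraph_isAcyclic_of_length
    (h : Module.length R V ≤ 2 ∨ Module.length R V = 3 ∧ ∃! M : Submodule R V, IsCoatom M) :
    (intersectionGraph R V).IsAcyclic := by
  rcases h with h | ⟨h, B, hB, huniq⟩
  · exact intersectionGraph_isAcyclic_of_length_le_two h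
  · exact intersectionGraph_isAcyclic_of_length_eq_three h hB huniq

lemma length_le_two_or_eq_three_of_forall_not_isCycle_length_three
    (h : ∀ (v : ProperSubmodule R V) (c : (intersectionGraph R V).Walk v v),
      ¬ (c.IsCycle ∧ c.length = 3)) :
    Module.length R V ≤ 2 ∨ Module.length R V = 3 ∧ ∃! M : Submodule R V, IsCoatom M := by
  by_contra hC
  obtain ⟨h2, h3⟩ := not_or.1 hC
  suffices ∃ (v : ProperSubmodule R V) (w : (intersectionGraph R V).Walk v v),
      w.IsCycle ∧ w.length = 3 by
    obtain ⟨v, c, hc⟩ := this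
    exact h v c hc
  rcases le_or_gt 4 (Module.length R V) with h4 | h4
  · exact intersectionGraph_exists_isCycle_length_three_of_four_le_length h4
  have hlen : Module.length R V = 3 :=
    le_antisymm (le_of_lt_add_one h4) (add_one_le_of_lt (not_le.1 h2))
  have : IsNoetherian R V := isNoetherian_of_length_ne_top (by simp [hlen])
  have : Nontrivial V := Module.length_pos_iff.1 (by rw [hlen]; norm_num)
  obtain ⟨B, hB⟩ := IsCoatomic.exists_coatom (α := Submodule R V)
  obtain ⟨N, hN, hNB⟩ : ∃ N, IsCoatom N ∧ N ≠ B := by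
    by_contra! hall
    exact h3 ⟨hlen, B, hB, hall⟩
  exact intersectionGraph_exists_isCycle_length_three_of_isCoatom hlen hN hB hNB

lemma exists_le_two_hasCompositionSeriesOfLength_iff :
    (∃ n ≤ 2, HasCompositionSeriesOfLength R V n) ↔ Module.length R V ≤ 2 := by
  simp only [hasCompositionSeriesOfLength_iff_length_eq]
  exact ⟨fun ⟨n, hn, h⟩ ↦ h ▸ by exact_mod_cast hn,
    fun h ↦ (ENat.le_natCast_iff.1 h).imp fun _ ⟨h, hn⟩ ↦ ⟨hn, h⟩⟩

end Module

theorem stmt8 (R V : Type*) [Ring R] [AddCommGroup V] [Module R V] :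
    ((∀ (v : ProperSubmodule R V) (c : (intersectionGraph R V).Walk v v), ¬ c.IsCycle) ↔
      (∀ (v : ProperSubmodule R V) (c : (intersectionGraph R V).Walk v v),
        ¬ (c.IsCycle ∧ c.length = 3))) ∧
    ((∀ (v : ProperSubmodule R V) (c : (intersectionGraph R V).Walk v v), ¬ c.IsCycle) ↔
      ((∃ n ≤ 2, HasCompositionSeriesOfLength R V n) ∨
        (HasCompositionSeriesOfLength R V 3 ∧
          ∃! M : Submodule R V, IsCoatom M))) := by
  rw [exists_le_two_hasCompositionSeriesOfLength_iff,
    hasCompositionSeriesOfLength_iff_length_eq, Nat.cast_ofNat]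
  have no_triangle_of_acyclic (h : (intersectionGraph R V).IsAcyclic) (v : ProperSubmodule R V)
      (c : (intersectionGraph R V).Walk v v) : ¬ (c.IsCycle ∧ c.length = 3) :=
    fun hc ↦ h c hc.1
  exact ⟨⟨no_triangle_of_acyclic, fun h ↦ intersectionGraph_isAcyclic_of_length
      (length_le_two_or_eq_three_of_forall_not_isCycle_length_three h)⟩,
    ⟨fun h ↦ length_le_two_or_eq_three_of_forall_not_isCycle_length_three
      (no_triangle_of_acyclic h), intersectionGraph_isAcyclic_of_length⟩⟩
end
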